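/- (Lemma 4.1) Condition (1.5) holds if and only if d₁(x) → 0 as |x| → ∞, and condition (1.5) holds if and only if d₂(x) → 0 as |x| → ∞. -/
import Mathlib


open MeasureTheory Filter Real Set
open scoped ENNReal

noncomputable section

/-- Condition (1.5): for every `a > 0`, `∫_{x-a}^{x+a} q(t) dt → ∞` as `|x| → ∞`. -/
def Cond15 (q : ℝ → ℝ) : Prop :=
  ∀ a : ℝ, 0 < a → Tendsto (fun x => ∫ t in (x - a)..(x + a), q t) (cocompact ℝ) atTop

/-- `(u, v)` is a principal fundamental system of solutions (PFSS) of `z'' = q z`.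
Local absolute continuity of `u'` together with `u'' = q u` a.e. is encoded via the
fundamental theorem of calculus: `u' b - u' a = ∫_a^b q t * u t dt` for all `a, b`. -/
def IsPFSS (q u v : ℝ → ℝ) : Prop :=
  ContDiff ℝ 1 u ∧ ContDiff ℝ 1 v ∧
  (∀ a b : ℝ, deriv u b - deriv u a = ∫ t in a..b, q t * u t) ∧
  (∀ a b : ℝ, deriv v b - deriv v a = ∫ t in a..b, q t * v t) ∧
  (∀ x, 0 < u x) ∧ (∀ x, 0 < v x) ∧
  (∀ x, deriv u x < 0) ∧ (∀ x, 0 < deriv v x) ∧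
  (∀ x, deriv v x * u x - deriv u x * v x = 1) ∧
  (∀ x, u x = v x * ∫ t in Set.Ioi x, ((v t) ^ 2)⁻¹) ∧
  Tendsto u atTop (nhds 0) ∧ Tendsto (deriv u) atTop (nhds 0) ∧
  Tendsto v atTop atTop ∧ Tendsto (deriv v) atTop atTop ∧
  Tendsto v atBot (nhds 0) ∧ Tendsto (deriv v) atBot (nhds 0) ∧
  Tendsto u atBot atTop ∧ Tendsto (fun x => |deriv u x|) atBot atTop

/-- The Green function: `G(x,t) = u(x) v(t)` for `x ≥ t`, `G(x,t) = u(t) v(x)` for `x ≤ t`. -/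
def GreenFn (u v : ℝ → ℝ) (x t : ℝ) : ℝ := if x ≤ t then u t * v x else u x * v t

/-- The Green operator `(Gf)(x) = ∫_ℝ G(x,t) f(t) dt`. -/
def GreenOp (u v f : ℝ → ℝ) (x : ℝ) : ℝ := ∫ t, GreenFn u v x t * f t
private lemma shift_cocompact (c : ℝ) :
    Tendsto (fun x : ℝ => x + c) (cocompact ℝ) (cocompact ℝ) := by
  rw [cocompact_eq_atBot_atTop, tendsto_sup]
  constructor
  · exact (tendsto_atBot_add_const_right _ c tendsto_id).mono_right le_sup_left
  · exact (tendsto_atTop_add_const_right _ c tendsto_id).mono_right le_sup_right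

private lemma bound_A {F : ℝ → ℝ} (hF : Continuous F) (hmono : Monotone F)
    (hF0 : ∀ t, 0 ≤ t → 0 ≤ F t) {s c : ℝ} (hc : 0 < c) (hcs : c ≤ s)
    (h1 : (1 : ℝ) = ∫ t in (0:ℝ)..s, F t) : F (c / 2) ≤ 2 / c := by
  have hint : ∀ a b : ℝ, IntervalIntegrable F volume a b := fun a b =>
    hF.intervalIntegrable a b
  have hsplit : (∫ t in (0:ℝ)..(c/2), F t) + ∫ t in (c/2)..s, F t = ∫ t in (0:ℝ)..s, F t :=
    intervalIntegral.integral_add_adjacent_intervals (hint _ _) (hint _ _)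
  have h2 : 0 ≤ ∫ t in (0:ℝ)..(c/2), F t :=
    intervalIntegral.integral_nonneg (by linarith) (fun u hu => hF0 u hu.1)
  have h3 : (∫ t in (c/2)..s, (F (c/2))) ≤ ∫ t in (c/2)..s, F t :=
    intervalIntegral.integral_mono_on (by linarith) (intervalIntegrable_const) (hint _ _)
      (fun u hu => hmono hu.1)
  rw [intervalIntegral.integral_const, smul_eq_mul] at h3
  have h4 : 0 ≤ F (c/2) := hF0 _ (by linarith)
  have h5 : (c/2) * F (c/2) ≤ (s - c/2) * F (c/2) := by nlinarith
  rw [le_div_iff₀ hc]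
  nlinarith

private lemma bound_B {F : ℝ → ℝ} (hF : Continuous F) (hmono : Monotone F)
    {s : ℝ} (hs : 0 < s)
    (h1 : (1 : ℝ) = ∫ t in (0:ℝ)..s, F t) : 1 / s ≤ F s := by
  have h3 : (∫ t in (0:ℝ)..s, F t) ≤ ∫ t in (0:ℝ)..s, (F s) :=
    intervalIntegral.integral_mono_on hs.le (hF.intervalIntegrable _ _)
      intervalIntegrable_const (fun u hu => hmono hu.2)
  rw [intervalIntegral.integral_const, smul_eq_mul, sub_zero] at h3
  rw [div_le_iff₀ hs]
  linarith

section Fprops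
variable {q : ℝ → ℝ}

private lemma F1_cont (hQ : ∀ a b : ℝ, IntervalIntegrable q volume a b) (x : ℝ) : Continuous (fun t => ∫ ξ in (x - t)..x, q ξ) := by
  have : (fun t => ∫ ξ in (x - t)..x, q ξ) = fun t => -(∫ ξ in x..(x - t), q ξ) :=
    funext fun t => intervalIntegral.integral_symm x (x - t)
  rw [this]
  exact ((intervalIntegral.continuous_primitive hQ x).comp
    (continuous_const.sub continuous_id)).neg

private lemma F1_mono (hQ : ∀ a b : ℝ, IntervalIntegrable q volume a b)
    (hq0 : ∀ ξ : ℝ, 0 ≤ q ξ) (x : ℝ) : Monotone (fun t => ∫ ξ in (x - t)..x, q ξ) := by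
  intro t₁ t₂ h
  have hsplit : (∫ ξ in (x - t₂)..(x - t₁), q ξ) + ∫ ξ in (x - t₁)..x, q ξ
      = ∫ ξ in (x - t₂)..x, q ξ :=
    intervalIntegral.integral_add_adjacent_intervals (hQ _ _) (hQ _ _)
  have h0 : 0 ≤ ∫ ξ in (x - t₂)..(x - t₁), q ξ :=
    intervalIntegral.integral_nonneg (by linarith) (fun u _ => hq0 u)
  simp only
  linarith

private lemma F1_nonneg (hq0 : ∀ ξ : ℝ, 0 ≤ q ξ) (x : ℝ) : ∀ t, 0 ≤ t → 0 ≤ (fun t => ∫ ξ in (x - t)..x, q ξ) t := by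
  intro t ht
  exact intervalIntegral.integral_nonneg (by linarith) (fun u _ => hq0 u)

private lemma F2_cont (hQ : ∀ a b : ℝ, IntervalIntegrable q volume a b) (x : ℝ) : Continuous (fun t => ∫ ξ in x..(x + t), q ξ) :=
  (intervalIntegral.continuous_primitive hQ x).comp (continuous_const.add continuous_id)

private lemma F2_mono (hQ : ∀ a b : ℝ, IntervalIntegrable q volume a b)
    (hq0 : ∀ ξ : ℝ, 0 ≤ q ξ) (x : ℝ) : Monotone (fun t => ∫ ξ in x..(x + t), q ξ) := by
  intro t₁ t₂ h
  have hsplit : (∫ ξ in x..(x + t₁), q ξ) + ∫ ξ in (x + t₁)..(x + t₂), q ξ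
      = ∫ ξ in x..(x + t₂), q ξ :=
    intervalIntegral.integral_add_adjacent_intervals (hQ _ _) (hQ _ _)
  have h0 : 0 ≤ ∫ ξ in (x + t₁)..(x + t₂), q ξ :=
    intervalIntegral.integral_nonneg (by linarith) (fun u _ => hq0 u)
  simp only
  linarith

private lemma F2_nonneg (hq0 : ∀ ξ : ℝ, 0 ≤ q ξ) (x : ℝ) : ∀ t, 0 ≤ t → 0 ≤ (fun t => ∫ ξ in x..(x + t), q ξ) t := by
  intro t ht
  exact intervalIntegral.integral_nonneg (by linarith) (fun u _ => hq0 u)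

end Fprops


/-- Lemma 4.1: condition (1.5) holds iff `d₁(x) → 0` as `|x| → ∞`, and iff `d₂(x) → 0`
as `|x| → ∞`. -/
theorem lemma_4_1 (q : ℝ → ℝ) (hq_loc : LocallyIntegrable q) (hq : ∀ x, 1 ≤ q x)
    (d₁ d₂ : ℝ → ℝ)
    (hd₁ : ∀ x, 0 < d₁ x ∧
      (1 : ℝ) = ∫ t in (0 : ℝ)..(Real.sqrt 2 * d₁ x), ∫ ξ in (x - t)..x, q ξ)
    (hd₂ : ∀ x, 0 < d₂ x ∧
      (1 : ℝ) = ∫ t in (0 : ℝ)..(Real.sqrt 2 * d₂ x), ∫ ξ in x..(x + t), q ξ) :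
    (Cond15 q ↔ Tendsto d₁ (cocompact ℝ) (nhds 0)) ∧
    (Cond15 q ↔ Tendsto d₂ (cocompact ℝ) (nhds 0)) := by
  have hq0 : ∀ ξ : ℝ, 0 ≤ q ξ := fun ξ => zero_le_one.trans (hq ξ)
  have hQ : ∀ a b : ℝ, IntervalIntegrable q volume a b := fun a b =>
    intervalIntegrable_iff.2
      ((hq_loc.integrableOn_isCompact isCompact_uIcc).mono_set Set.uIoc_subset_uIcc)
  have hsqrt2 : (0:ℝ) < Real.sqrt 2 := Real.sqrt_pos.2 (by norm_num)
  constructor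
  · -- d₁
    constructor
    · intro h
      rw [Metric.tendsto_nhds]
      intro ε hε
      have hc : 0 < Real.sqrt 2 * ε := mul_pos hsqrt2 hε
      set c := Real.sqrt 2 * ε with hcdef
      have hev : ∀ᶠ y in cocompact ℝ, 2/c < ∫ t in (y - c/4)..(y + c/4), q t :=
        (h (c/4) (by linarith)).eventually_gt_atTop (2/c)
      filter_upwards [(shift_cocompact (-(c/4))).eventually hev] with x hx
      rw [Real.dist_eq, sub_zero, abs_of_pos (hd₁ x).1]
      by_contra hge
      push_neg at hge
      have hcs : c ≤ Real.sqrt 2 * d₁ x := mul_le_mul_of_nonneg_left hge hsqrt2.le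
      have key : (∫ ξ in (x - c/2)..x, q ξ) ≤ 2/c :=
        bound_A (F1_cont hQ x) (F1_mono hQ hq0 x) (F1_nonneg hq0 x) hc hcs (hd₁ x).2
      have e1 : x + -(c/4) - c/4 = x - c/2 := by ring
      have e2 : x + -(c/4) + c/4 = x := by ring
      rw [e1, e2] at hx
      linarith
    · intro h a ha
      rw [tendsto_atTop]
      intro M
      set m := min (2*a) (1 / max M 1) with hm
      have hmpos : 0 < m := lt_min (by linarith) (by positivity)
      have hδ : 0 < m / Real.sqrt 2 := div_pos hmpos hsqrt2
      have hev : ∀ᶠ x in cocompact ℝ, dist (d₁ (x + a)) 0 < m / Real.sqrt 2 :=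
        Metric.tendsto_nhds.1 (h.comp (shift_cocompact a)) _ hδ
      filter_upwards [hev] with x hx
      rw [Real.dist_eq, sub_zero, abs_of_pos (hd₁ _).1] at hx
      set s := Real.sqrt 2 * d₁ (x + a) with hs
      have hspos : 0 < s := mul_pos hsqrt2 (hd₁ _).1
      have hsm : s < m := by
        have h2 := mul_lt_mul_of_pos_left hx hsqrt2
        rwa [mul_div_cancel₀ _ (ne_of_gt hsqrt2)] at h2
      have key : 1/s ≤ ∫ ξ in (x + a - s)..(x + a), q ξ :=
        bound_B (F1_cont hQ (x + a)) (F1_mono hQ hq0 (x + a)) hspos (hd₁ (x + a)).2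
      have hsub : x - a ≤ x + a - s := by
        have : s ≤ 2*a := (hsm.trans_le (min_le_left _ _)).le
        linarith
      have hsplit : (∫ ξ in (x - a)..(x + a - s), q ξ) + ∫ ξ in (x + a - s)..(x + a), q ξ
          = ∫ ξ in (x - a)..(x + a), q ξ :=
        intervalIntegral.integral_add_adjacent_intervals (hQ _ _) (hQ _ _)
      have h0 : 0 ≤ ∫ ξ in (x - a)..(x + a - s), q ξ :=
        intervalIntegral.integral_nonneg hsub (fun u _ => hq0 u)
      have hmax : (0:ℝ) < max M 1 := lt_of_lt_of_le zero_lt_one (le_max_right M 1)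
      have hM : max M 1 ≤ 1/s := by
        have h1 : s ≤ 1 / max M 1 := (hsm.trans_le (min_le_right _ _)).le
        rw [le_div_iff₀ hspos]
        calc max M 1 * s ≤ max M 1 * (1 / max M 1) :=
              mul_le_mul_of_nonneg_left h1 hmax.le
          _ = 1 := mul_one_div_cancel (ne_of_gt hmax)
      calc M ≤ max M 1 := le_max_left _ _
        _ ≤ 1/s := hM
        _ ≤ ∫ ξ in (x + a - s)..(x + a), q ξ := key
        _ ≤ ∫ t in (x - a)..(x + a), q t := by linarith
  · -- d₂
    constructor
    · intro h
      rw [Metric.tendsto_nhds]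
      intro ε hε
      have hc : 0 < Real.sqrt 2 * ε := mul_pos hsqrt2 hε
      set c := Real.sqrt 2 * ε with hcdef
      have hev : ∀ᶠ y in cocompact ℝ, 2/c < ∫ t in (y - c/4)..(y + c/4), q t :=
        (h (c/4) (by linarith)).eventually_gt_atTop (2/c)
      filter_upwards [(shift_cocompact (c/4)).eventually hev] with x hx
      rw [Real.dist_eq, sub_zero, abs_of_pos (hd₂ x).1]
      by_contra hge
      push_neg at hge
      have hcs : c ≤ Real.sqrt 2 * d₂ x := mul_le_mul_of_nonneg_left hge hsqrt2.le
      have key : (∫ ξ in x..(x + c/2), q ξ) ≤ 2/c :=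
        bound_A (F2_cont hQ x) (F2_mono hQ hq0 x) (F2_nonneg hq0 x) hc hcs (hd₂ x).2
      have e1 : x + c/4 - c/4 = x := by ring
      have e2 : x + c/4 + c/4 = x + c/2 := by ring
      rw [e1, e2] at hx
      linarith
    · intro h a ha
      rw [tendsto_atTop]
      intro M
      set m := min (2*a) (1 / max M 1) with hm
      have hmpos : 0 < m := lt_min (by linarith) (by positivity)
      have hδ : 0 < m / Real.sqrt 2 := div_pos hmpos hsqrt2
      have hev : ∀ᶠ x in cocompact ℝ, dist (d₂ (x + -a)) 0 < m / Real.sqrt 2 :=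
        Metric.tendsto_nhds.1 (h.comp (shift_cocompact (-a))) _ hδ
      filter_upwards [hev] with x hx
      have ea : x + -a = x - a := by ring
      rw [ea, Real.dist_eq, sub_zero, abs_of_pos (hd₂ _).1] at hx
      set s := Real.sqrt 2 * d₂ (x - a) with hs
      have hspos : 0 < s := mul_pos hsqrt2 (hd₂ _).1
      have hsm : s < m := by
        have h2 := mul_lt_mul_of_pos_left hx hsqrt2
        rwa [mul_div_cancel₀ _ (ne_of_gt hsqrt2)] at h2
      have key : 1/s ≤ ∫ ξ in (x - a)..(x - a + s), q ξ :=
        bound_B (F2_cont hQ (x - a)) (F2_mono hQ hq0 (x - a)) hspos (hd₂ (x - a)).2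
      have hsub : x - a + s ≤ x + a := by
        have : s ≤ 2*a := (hsm.trans_le (min_le_left _ _)).le
        linarith
      have hsplit : (∫ ξ in (x - a)..(x - a + s), q ξ) + ∫ ξ in (x - a + s)..(x + a), q ξ
          = ∫ ξ in (x - a)..(x + a), q ξ :=
        intervalIntegral.integral_add_adjacent_intervals (hQ _ _) (hQ _ _)
      have h0 : 0 ≤ ∫ ξ in (x - a + s)..(x + a), q ξ :=
        intervalIntegral.integral_nonneg hsub (fun u _ => hq0 u)
      have hmax : (0:ℝ) < max M 1 := lt_of_lt_of_le zero_lt_one (le_max_right M 1)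
      have hM : max M 1 ≤ 1/s := by
        have h1 : s ≤ 1 / max M 1 := (hsm.trans_le (min_le_right _ _)).le
        rw [le_div_iff₀ hspos]
        calc max M 1 * s ≤ max M 1 * (1 / max M 1) :=
              mul_le_mul_of_nonneg_left h1 hmax.le
          _ = 1 := mul_one_div_cancel (ne_of_gt hmax)
      calc M ≤ max M 1 := le_max_left _ _
        _ ≤ 1/s := hM
        _ ≤ ∫ ξ in (x - a)..(x - a + s), q ξ := key
        _ ≤ ∫ t in (x - a)..(x + a), q t := by linarith
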